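/- Assume p and q are even (hence both ≥ 2). Then the number of tuples (z, b, a), where z is a ρ-vector, b_1 ≥ b_2 ≥ … ≥ b_q ≥ 0 and a_1 ≥ a_2 ≥ … ≥ a_{p−1} ≥ 0 are integers, satisfying z_i − 2b_i = q + 1 − i for all 1 ≤ i ≤ q and z_{q+j} + 2a_{p−j} = −j for all 1 ≤ j ≤ p−1, equals the binomial coefficient C(k−1, q/2) = C(k−1, (p−2)/2). -/

import Mathlib

/-- A solution for the Dirac cohomology multiplicity count of `X'(p,q;0,1)` for
`Sp(2n,ℝ)`, `n = 2k−1 = p+q−1`: a ρ-vector `z` (strictly decreasing with absolute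
values exactly `{1, …, n}`), weakly decreasing nonnegative integers
`b_1 ≥ … ≥ b_q ≥ 0`, `a_1 ≥ … ≥ a_{p−1} ≥ 0` with `z_i − 2b_i = q + 1 − i` for
`1 ≤ i ≤ q` and `z_{q+j} + 2a_{p−j} = −j` for `1 ≤ j ≤ p−1`
(written here with 0-based indices). -/
structure RhoSol01 (n p q : ℕ) (hp : 1 ≤ p) (hn : q - 1 + p = n) where
  z : Fin n → ℤ
  b : Fin q → ℤ
  a : Fin (p - 1) → ℤ
  z_anti : StrictAnti z
  z_abs : Finset.univ.image (fun i => |z i|) = Finset.Icc (1 : ℤ) (n : ℤ)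
  b_anti : Antitone b
  a_anti : Antitone a
  b_nonneg : ∀ i, 0 ≤ b i
  a_nonneg : ∀ m, 0 ≤ a m
  hzb : ∀ i : Fin q,
    z ⟨i.1, by have := i.isLt; omega⟩ - 2 * b i = (q : ℤ) - i.1
  hza : ∀ j : Fin (p - 1),
    z ⟨q + j.1, by have := j.isLt; omega⟩ +
      2 * a ⟨p - 2 - j.1, by have := j.isLt; omega⟩ = -(j.1 : ℤ) - 1

open Finset

/-!
A solution is determined by `z`, and `z`, being strictly decreasing, by its set of values `T`,
which contains exactly one of `±x` for each `1 ≤ x ≤ n`. The value `x = z i` sits at index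
`i = #{y ∈ T | x < y}`, which is `N - F x` for `x > 0` and `N + |x| - 1 - F |x|` for `x < 0`,
where `N` is the number of positive values and `F x` the number of those `≤ x`. So the
constraints on `b` and `a` say exactly that `N = q` and that `F x ≡ x` or `F x ≡ 0 (mod 2)`
according as `x` or `-x` lies in `T`. That parity condition holds iff `2u + 1` and `2u + 2`
always lie in `T` together, and `n = 2m + 1` is not a value because `q` is even. Hence the
positive values are the union of `q / 2` of the `m` pairs `{2u + 1, 2u + 2}`, and any choice
of pairs occurs.
-/

section StrictAnti

variable {α : Type*} [LinearOrder α] {n : ℕ}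

theorem StrictAnti.card_filter_image_lt {z : Fin n → α} (hz : StrictAnti z) (i : Fin n) :
    #{y ∈ univ.image z | z i < y} = i := by
  rw [filter_image, card_image_of_injective _ hz.injective]
  have : ({j | z i < z j} : Finset (Fin n)) = Iio i := by
    ext j; simp [hz.lt_iff_gt]
  rw [this, Fin.card_Iio]

theorem StrictAnti.eq_of_image_eq {f g : Fin n → α} (hf : StrictAnti f) (hg : StrictAnti g)
    (h : univ.image f = univ.image g) : f = g := by
  have hcard : #(univ.image g) = n := by
    rw [card_image_of_injective _ hg.injective, card_univ, Fintype.card_fin]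
  have key : ∀ {f : Fin n → α}, StrictAnti f → univ.image f = univ.image g →
      f ∘ Fin.rev = (univ.image g).orderEmbOfFin hcard := fun hf h =>
    orderEmbOfFin_unique hcard (fun i => h ▸ mem_image_of_mem _ (mem_univ _))
      (hf.comp Fin.rev_strictAnti)
  funext i
  simpa using congrFun ((key hf h).trans (key hg rfl).symm) i.rev

theorem Finset.exists_strictAnti_image_eq (T : Finset α) (hT : #T = n) :
    ∃ z : Fin n → α, StrictAnti z ∧ univ.image z = T := by
  refine ⟨fun i => T.orderEmbOfFin hT i.rev,
    (T.orderEmbOfFin hT).strictMono.comp_strictAnti Fin.rev_strictAnti, ?_⟩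
  conv_rhs => rw [← image_orderEmbOfFin_univ T hT]
  exact (image_image (g := T.orderEmbOfFin hT) (f := Fin.rev)).symm.trans
    (congrArg _ (image_univ_equiv Fin.revPerm))

theorem StrictAnti.antitone_add_val {z : Fin n → ℤ} (hz : StrictAnti z) :
    Antitone fun i : Fin n => z i + i := by
  cases n with
  | zero => exact fun i => i.elim0
  | succ n =>
    refine Fin.antitone_iff_succ_le.mpr fun i => ?_
    have := hz (Fin.castSucc_lt_succ (i := i))
    simp only [Fin.val_succ, Fin.val_castSucc]
    push_cast
    omega

end StrictAnti

def posCount (T : Finset ℤ) (m : ℕ) : ℕ := #{y ∈ T | 0 < y ∧ y ≤ (m : ℤ)}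

def PosCountParity (N : ℕ) (T : Finset ℤ) : Prop :=
  ∀ m : ℕ, 1 ≤ m → m ≤ N → posCount T m % 2 = if (m : ℤ) ∈ T then m % 2 else 0

def HasPairedPositives (N : ℕ) (T : Finset ℤ) : Prop :=
  ∀ u : ℕ, 2 * u + 2 ≤ N → (2 * (u : ℤ) + 1 ∈ T ↔ 2 * (u : ℤ) + 2 ∈ T)

section PosCount

variable {T : Finset ℤ} {N : ℕ}

theorem posCount_zero (T : Finset ℤ) : posCount T 0 = 0 := by
  simp only [posCount, card_eq_zero, filter_eq_empty_iff]
  omega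

theorem posCount_succ (T : Finset ℤ) (m : ℕ) :
    posCount T (m + 1) = posCount T m + if (m : ℤ) + 1 ∈ T then 1 else 0 := by
  unfold posCount
  split_ifs with h
  · rw [← card_insert_of_notMem (a := (m : ℤ) + 1) (by simp)]
    congr 1; ext y; simp only [mem_filter, mem_insert]; push_cast; grind
  · congr 1; ext y; simp only [mem_filter]; push_cast; grind

theorem posCount_le (T : Finset ℤ) (m : ℕ) : posCount T m ≤ m := by
  calc posCount T m ≤ #(Icc (1 : ℤ) m) := card_le_card fun y hy => by
        simp only [mem_filter] at hy; simp only [mem_Icc]; omega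
    _ = m := by simp

theorem card_filter_lt_add_posCount (T : Finset ℤ) (m : ℕ) :
    #{y ∈ T | (m : ℤ) < y} + posCount T m = #{y ∈ T | 0 < y} := by
  have : ({y ∈ T | (m : ℤ) < y} : Finset ℤ) =
      {y ∈ {y ∈ T | 0 < y} | ¬ y ≤ (m : ℤ)} := by
    ext y; simp only [mem_filter]; grind
  rw [posCount, this, ← filter_filter, add_comm, card_filter_add_card_filter_not]

theorem HasPairedPositives.posCount_two_mul_mod_two (hT : HasPairedPositives N T) {u : ℕ}
    (hu : 2 * u ≤ N) : posCount T (2 * u) % 2 = 0 := by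
  induction u with
  | zero => simp [posCount_zero]
  | succ u ih =>
    have := hT u (by omega)
    rw [show 2 * (u + 1) = 2 * u + 1 + 1 by ring, posCount_succ, posCount_succ]
    push_cast
    split_ifs <;> grind

theorem posCountParity_iff_hasPairedPositives : PosCountParity N T ↔ HasPairedPositives N T := by
  constructor
  · intro h u hu
    have h0 : posCount T (2 * u) % 2 = 0 := by
      rcases Nat.eq_zero_or_pos u with rfl | hu0
      · simp [posCount_zero]
      · have := h (2 * u) (by omega) (by omega)
        split_ifs at this <;> omega
    have h2 := h (2 * u + 2) (by omega) (by omega)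
    rw [show 2 * u + 2 = 2 * u + 1 + 1 by ring, posCount_succ, posCount_succ] at h2
    push_cast at h2
    split_ifs at h2 <;> grind
  · intro hT m hm1 hmN
    obtain ⟨u, rfl | rfl⟩ := Nat.even_or_odd' m
    · have := hT.posCount_two_mul_mod_two hmN
      split_ifs <;> omega
    · have := hT.posCount_two_mul_mod_two (u := u) (by omega)
      rw [posCount_succ]
      push_cast
      split_ifs <;> omega

end PosCount

def IsSignedSet (n : ℕ) (T : Finset ℤ) : Prop :=
  Set.InjOn abs (T : Set ℤ) ∧ T.image abs = Icc 1 (n : ℤ)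

noncomputable def signedSet (n : ℕ) (P : Finset ℤ) : Finset ℤ :=
  {x ∈ Icc (-(n : ℤ)) n | x ≠ 0 ∧ (0 < x ↔ |x| ∈ P)}

section SignedSet

variable {n m : ℕ} {T P : Finset ℤ} {x : ℤ}

theorem mem_signedSet :
    x ∈ signedSet n P ↔ x ≠ 0 ∧ |x| ≤ n ∧ (0 < x ↔ |x| ∈ P) := by
  simp only [signedSet, mem_filter, mem_Icc, abs_le]
  tauto

theorem isSignedSet_signedSet : IsSignedSet n (signedSet n P) := by
  constructor
  · intro x hx y hy hxy
    simp only [mem_coe, mem_signedSet] at hx hy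
    have hxy' : |x| = |y| := hxy
    rw [hxy'] at hx
    rcases abs_eq_abs.mp hxy' with h | h
    · exact h
    · have := hx.2.2.trans hy.2.2.symm
      omega
  · ext y
    simp only [mem_image, mem_signedSet, mem_Icc]
    constructor
    · rintro ⟨x, ⟨hx0, hxn, -⟩, rfl⟩
      exact ⟨Int.one_le_abs hx0, hxn⟩
    · rintro ⟨h1, h2⟩
      have hy : |y| = y := abs_of_pos (by omega)
      by_cases hyP : y ∈ P
      · exact ⟨y, ⟨by omega, by rwa [hy], by simp only [hy, hyP, iff_true]; omega⟩, hy⟩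
      · exact ⟨-y, ⟨by omega, by rwa [abs_neg, hy],
          by simp only [abs_neg, hy, hyP, iff_false]; omega⟩, by rw [abs_neg, hy]⟩

theorem filter_pos_signedSet (hP : ∀ y ∈ P, 0 < y ∧ y ≤ n) :
    {y ∈ signedSet n P | 0 < y} = P := by
  ext y
  simp only [mem_filter, mem_signedSet]
  constructor
  · rintro ⟨⟨-, -, h⟩, hy⟩
    rw [abs_of_pos hy] at h
    exact h.mp hy
  · intro hy
    obtain ⟨h0, hn⟩ := hP y hy
    rw [abs_of_pos h0]
    exact ⟨⟨by omega, hn, iff_of_true h0 hy⟩, h0⟩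

namespace IsSignedSet

theorem abs_mem_Icc (hT : IsSignedSet n T) (hx : x ∈ T) : 1 ≤ |x| ∧ |x| ≤ n :=
  mem_Icc.mp (hT.2 ▸ mem_image_of_mem abs hx)

theorem zero_notMem (hT : IsSignedSet n T) : (0 : ℤ) ∉ T := fun h => by
  simpa using (hT.abs_mem_Icc h).1

theorem mem_or_neg_mem (hT : IsSignedSet n T) (h1 : 1 ≤ x) (h2 : x ≤ n) :
    x ∈ T ∨ -x ∈ T := by
  obtain ⟨y, hy, hyx⟩ := mem_image.mp (hT.2 ▸ mem_Icc.mpr ⟨h1, h2⟩ : x ∈ T.image abs)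
  rcases abs_choice y with h | h <;> [left; right] <;> convert hy using 1 <;> omega

theorem notMem_of_neg_mem (hT : IsSignedSet n T) (hx : -x ∈ T) (h0 : x ≠ 0) : x ∉ T :=
  fun h => h0 (by have := hT.1 h hx (abs_neg x).symm; omega)

theorem card_eq (hT : IsSignedSet n T) : #T = n := by
  rw [← card_image_of_injOn hT.1, hT.2]
  simp

theorem eq_signedSet (hT : IsSignedSet n T) (hP : ∀ y, 0 < y → (y ∈ T ↔ y ∈ P)) :
    T = signedSet n P := by
  ext x
  rw [mem_signedSet]
  rcases lt_trichotomy x 0 with hx | rfl | hx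
  · have hx' : x ∈ T ↔ -x ≤ n ∧ -x ∉ T := by
      constructor
      · intro h
        exact ⟨by simpa [abs_of_neg hx] using (hT.abs_mem_Icc h).2,
          hT.notMem_of_neg_mem (by rwa [neg_neg]) (by omega)⟩
      · rintro ⟨h1, h2⟩
        simpa [h2] using hT.mem_or_neg_mem (x := -x) (by omega) h1
    rw [hx', abs_of_neg hx, ← hP _ (by omega)]
    simp only [ne_eq, hx.ne, not_false_eq_true, true_and, iff_false_intro hx.not_gt, false_iff]
  · simp [hT.zero_notMem]
  · rw [abs_of_pos hx, ← hP x hx]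
    exact ⟨fun h => ⟨hx.ne', by simpa [abs_of_pos hx] using (hT.abs_mem_Icc h).2,
      iff_of_true hx h⟩, fun h => h.2.2.mp hx⟩

theorem card_filter_abs_le (hT : IsSignedSet n T) (hm : m ≤ n) :
    #{y ∈ T | |y| ≤ (m : ℤ)} = m := by
  calc #{y ∈ T | |y| ≤ (m : ℤ)}
      = #({y ∈ T | |y| ≤ (m : ℤ)}.image abs) :=
        (card_image_of_injOn (hT.1.mono (filter_subset _ _))).symm
    _ = #{x ∈ Icc (1 : ℤ) n | x ≤ (m : ℤ)} := by
        rw [← hT.2, filter_image]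
    _ = m := by
        rw [show ({x ∈ Icc (1 : ℤ) n | x ≤ (m : ℤ)} : Finset ℤ) = Icc 1 (m : ℤ) by
          ext x; simp only [mem_filter, mem_Icc]; omega]
        simp

theorem card_filter_neg_lt_add_posCount (hT : IsSignedSet n T) (hm : -(m : ℤ) ∈ T) :
    #{y ∈ T | -(m : ℤ) < y} + 1 + posCount T m = #{y ∈ T | 0 < y} + m := by
  have hmn : m ≤ n := by
    have := (hT.abs_mem_Icc hm).2
    rw [abs_neg, Nat.abs_cast] at this
    omega
  have h0 : ∀ y ∈ T, y ≠ 0 := fun y hy h => hT.zero_notMem (h ▸ hy)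
  have hupper : #{y ∈ T | -(m : ℤ) < y} =
      #{y ∈ T | 0 < y} + #{y ∈ T | -(m : ℤ) < y ∧ y < 0} := by
    rw [← card_filter_add_card_filter_not (s := {y ∈ T | -(m : ℤ) < y}) (fun y => 0 < y),
      filter_filter, filter_filter]
    congr 2 <;> ext y <;> simp only [mem_filter] <;> grind
  have hlower : posCount T m + #{y ∈ T | -(m : ℤ) ≤ y ∧ y < 0} = m := by
    have h1 : posCount T m = #{y ∈ {y ∈ T | |y| ≤ (m : ℤ)} | 0 < y} := by
      rw [posCount, filter_filter]; congr 1; ext y; simp only [mem_filter, abs_le]; grind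
    have h2 : #{y ∈ T | -(m : ℤ) ≤ y ∧ y < 0} =
        #{y ∈ {y ∈ T | |y| ≤ (m : ℤ)} | ¬ 0 < y} := by
      rw [filter_filter]; congr 1; ext y; simp only [mem_filter, abs_le]; grind
    rw [h1, h2, card_filter_add_card_filter_not, hT.card_filter_abs_le hmn]
  have hinsert : {y ∈ T | -(m : ℤ) ≤ y ∧ y < 0} =
      insert (-(m : ℤ)) {y ∈ T | -(m : ℤ) < y ∧ y < 0} := by
    ext y; simp only [mem_filter, mem_insert]; grind
  rw [hinsert, card_insert_of_notMem (by simp)] at hlower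
  omega

end IsSignedSet

end SignedSet

def pairUnion (S : Finset ℤ) : Finset ℤ := S.image (2 * · + 1) ∪ S.image (2 * · + 2)

noncomputable def pairIndexSet (m : ℕ) (T : Finset ℤ) : Finset ℤ :=
  {u ∈ Ico 0 (m : ℤ) | 2 * u + 2 ∈ T}

section PairUnion

variable {m n : ℕ} {S T : Finset ℤ} {y : ℤ}

theorem mem_pairUnion : y ∈ pairUnion S ↔ (y - 1) / 2 ∈ S := by
  simp only [pairUnion, mem_union, mem_image]
  constructor
  · rintro (⟨u, hu, rfl⟩ | ⟨u, hu, rfl⟩) <;> convert hu using 1 <;> omega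
  · intro h
    rcases Int.emod_two_eq_zero_or_one (y - 1) with h2 | h2
    · exact Or.inl ⟨_, h, by omega⟩
    · exact Or.inr ⟨_, h, by omega⟩

theorem card_pairUnion (S : Finset ℤ) : #(pairUnion S) = 2 * #S := by
  have hodd : Function.Injective fun u : ℤ => 2 * u + 1 := fun a b h => by simp only at h; omega
  have heven : Function.Injective fun u : ℤ => 2 * u + 2 := fun a b h => by simp only at h; omega
  rw [pairUnion, card_union_of_disjoint, card_image_of_injective _ hodd,
    card_image_of_injective _ heven, two_mul]
  exact disjoint_left.mpr fun y h1 h2 => by simp only [mem_image] at h1 h2; omega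

theorem pos_and_le_of_mem_pairUnion (hS : S ⊆ Ico 0 (m : ℤ)) (hy : y ∈ pairUnion S) :
    0 < y ∧ y ≤ (2 * m + 1 : ℕ) := by
  have := mem_Ico.mp (hS (mem_pairUnion.mp hy))
  push_cast
  omega

theorem pairIndexSet_subset : pairIndexSet m T ⊆ Ico 0 (m : ℤ) :=
  filter_subset _ _

theorem pairIndexSet_signedSet_pairUnion (hS : S ⊆ Ico 0 (m : ℤ)) :
    pairIndexSet m (signedSet (2 * m + 1) (pairUnion S)) = S := by
  ext u
  simp only [pairIndexSet, mem_filter, mem_signedSet, mem_pairUnion, mem_Ico]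
  constructor
  · rintro ⟨hu, -, -, h⟩
    convert h.mp (by omega) using 1
    rw [abs_of_pos (by omega)]
    omega
  · intro hu
    have := hS hu
    rw [mem_Ico] at this
    refine ⟨this, by omega, by rw [abs_of_pos (by omega)]; push_cast; omega, ?_⟩
    rw [abs_of_pos (by omega)]
    exact iff_of_true (by omega) (by convert hu using 1; omega)

theorem hasPairedPositives_signedSet_pairUnion :
    HasPairedPositives n (signedSet n (pairUnion S)) := by
  intro u hu
  simp only [mem_signedSet, mem_pairUnion]
  rw [abs_of_pos (by omega), abs_of_pos (by omega)]
  have h1 : (2 * (u : ℤ) + 1 - 1) / 2 = u := by omega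
  have h2 : (2 * (u : ℤ) + 2 - 1) / 2 = u := by omega
  rw [h1, h2]
  constructor <;> rintro ⟨-, -, h⟩ <;>
    exact ⟨by omega, by omega, iff_of_true (by omega) (h.mp (by omega))⟩

theorem IsSignedSet.eq_signedSet_pairUnion (hT : IsSignedSet (2 * m + 1) T)
    (hpair : HasPairedPositives (2 * m + 1) T) (hmax : 2 * (m : ℤ) + 1 ∉ T) :
    T = signedSet (2 * m + 1) (pairUnion (pairIndexSet m T)) := by
  refine hT.eq_signedSet fun y hy => ?_
  rw [mem_pairUnion, pairIndexSet, mem_filter, mem_Ico]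
  by_cases hym : y ≤ 2 * m
  · obtain ⟨u, hu⟩ : ∃ u : ℕ, (u : ℤ) = (y - 1) / 2 :=
      ⟨((y - 1) / 2).toNat, by omega⟩
    have := hpair u (by omega)
    rw [← hu]
    rcases (by omega : y = 2 * u + 1 ∨ y = 2 * u + 2) with rfl | rfl
    · simp only [this]; constructor <;> [exact fun h => ⟨by omega, h⟩; exact fun h => h.2]
    · constructor <;> [exact fun h => ⟨by omega, h⟩; exact fun h => h.2]
  · refine iff_of_false (fun h => ?_) (by omega)
    have := (hT.abs_mem_Icc h).2
    rw [abs_of_pos hy] at this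
    exact hmax (by convert h; push_cast at this ⊢; omega)

end PairUnion

/-- What the constraints on `b` and `a` say about `z`, with witnesses `b i` and `a (n - 1 - i)`. -/
def IsAdmissible {n : ℕ} (q : ℕ) (z : Fin n → ℤ) : Prop :=
  ∀ i : Fin n, (i.1 < q → ∃ b ≥ 0, z i = q - i + 2 * b) ∧
    (q ≤ i.1 → ∃ a ≥ 0, z i = q - i - 1 - 2 * a)

section Admissible

variable {n q : ℕ} {z : Fin n → ℤ}

theorem isSignedSet_image (habs : univ.image (fun i => |z i|) = Icc 1 (n : ℤ)) :
    IsSignedSet n (univ.image z) := by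
  have hinj : Function.Injective fun i => |z i| := by
    rw [← Set.injOn_univ, ← coe_univ, ← card_image_iff, habs]
    simp
  refine ⟨?_, by rw [image_image]; exact habs⟩
  rintro _ hx _ hy hxy
  obtain ⟨i, -, rfl⟩ := mem_image.mp hx
  obtain ⟨j, -, rfl⟩ := mem_image.mp hy
  rw [hinj hxy]

theorem StrictAnti.add_posCount_of_eq_natCast (hz : StrictAnti z) {i : Fin n} {m : ℕ}
    (hi : z i = m) : i + posCount (univ.image z) m = #{y ∈ univ.image z | 0 < y} := by
  rw [← card_filter_lt_add_posCount _ m, ← hi, hz.card_filter_image_lt]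

theorem StrictAnti.add_posCount_of_eq_neg (hz : StrictAnti z)
    (habs : univ.image (fun i => |z i|) = Icc 1 (n : ℤ)) {i : Fin n} {m : ℕ} (hi : z i = -m) :
    i + 1 + posCount (univ.image z) m = #{y ∈ univ.image z | 0 < y} + m := by
  rw [← (isSignedSet_image habs).card_filter_neg_lt_add_posCount
    (hi ▸ mem_image_of_mem z (mem_univ i)), ← hi, hz.card_filter_image_lt]

namespace IsAdmissible

theorem pos_iff (h : IsAdmissible q z) (i : Fin n) : 0 < z i ↔ i.1 < q := by
  by_cases hi : i.1 < q
  · obtain ⟨b, hb, hzi⟩ := (h i).1 hi; omega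
  · obtain ⟨a, ha, hzi⟩ := (h i).2 (by omega); omega

theorem card_filter_pos (h : IsAdmissible q z) (hz : StrictAnti z) (hq : q ≤ n) :
    #{y ∈ univ.image z | 0 < y} = q := by
  rw [filter_image, card_image_of_injective _ hz.injective]
  simp only [h.pos_iff, Fin.card_filter_val_lt]
  omega

theorem posCountParity (h : IsAdmissible q z) (hz : StrictAnti z)
    (habs : univ.image (fun i => |z i|) = Icc 1 (n : ℤ)) (hq : q ≤ n) :
    PosCountParity n (univ.image z) := by
  have hT := isSignedSet_image habs
  have hcard := h.card_filter_pos hz hq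
  intro m hm1 hmn
  rcases hT.mem_or_neg_mem (x := m) (by omega) (by omega) with hm | hm
  · obtain ⟨i, -, hi⟩ := mem_image.mp hm
    have := hz.add_posCount_of_eq_natCast hi
    obtain ⟨b, hb, hzi⟩ := (h i).1 ((h.pos_iff i).mp (by omega))
    rw [if_pos hm]
    omega
  · obtain ⟨i, -, hi⟩ := mem_image.mp hm
    have := hz.add_posCount_of_eq_neg habs hi
    obtain ⟨a, ha, hzi⟩ := (h i).2 (by have := (h.pos_iff i).not.mp (by omega); omega)
    rw [if_neg (hT.notMem_of_neg_mem hm (by omega))]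
    omega

end IsAdmissible

theorem isAdmissible_of_posCountParity (hz : StrictAnti z)
    (habs : univ.image (fun i => |z i|) = Icc 1 (n : ℤ))
    (hcard : #{y ∈ univ.image z | 0 < y} = q) (hpar : PosCountParity n (univ.image z)) :
    IsAdmissible q z := by
  have hT := isSignedSet_image habs
  intro i
  have hzi : z i ∈ univ.image z := mem_image_of_mem z (mem_univ i)
  have hbound := hT.abs_mem_Icc hzi
  obtain ⟨m, hm | hm⟩ := Int.eq_nat_or_neg (z i)
  · rw [hm, Nat.abs_cast] at hbound
    rw [hm] at hzi
    have hmT := hpar m (by omega) (by omega)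
    rw [if_pos hzi] at hmT
    have hi := hz.add_posCount_of_eq_natCast hm
    have hle := posCount_le (univ.image z) m
    have hcount : 1 ≤ posCount (univ.image z) m := card_pos.mpr ⟨m, by
      simp only [mem_filter]; exact ⟨hzi, by omega, le_rfl⟩⟩
    exact ⟨fun _ => ⟨(m - posCount (univ.image z) m : ℤ) / 2, by omega, by omega⟩,
      fun _ => by omega⟩
  · rw [hm, abs_neg, Nat.abs_cast] at hbound
    rw [hm] at hzi
    have hmT := hpar m (by omega) (by omega)
    rw [if_neg (hT.notMem_of_neg_mem hzi (by omega))] at hmT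
    have hi := hz.add_posCount_of_eq_neg habs hm
    have hle : posCount (univ.image z) m ≤ m - 1 := by
      obtain ⟨k, rfl⟩ : ∃ k, m = k + 1 := ⟨m - 1, by omega⟩
      rw [posCount_succ, if_neg (by exact_mod_cast hT.notMem_of_neg_mem hzi (by omega))]
      simpa using posCount_le (univ.image z) k
    exact ⟨fun _ => by omega,
      fun _ => ⟨(posCount (univ.image z) m : ℤ) / 2, by omega, by omega⟩⟩

end Admissible

namespace RhoSol01

section

variable {n p q : ℕ} {hp : 1 ≤ p} {hn : q - 1 + p = n}

theorem z_sub_two_mul_b (s : RhoSol01 n p q hp hn) {i : Fin n} {k : Fin q} (h : i.1 = k.1) :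
    s.z i - 2 * s.b k = q - i := by
  have e : (⟨k, by omega⟩ : Fin n) = i := Fin.ext h.symm
  rw [← e, s.hzb k]

theorem z_add_two_mul_a (s : RhoSol01 n p q hp hn) (hq : 0 < q) {i : Fin n} {k : Fin (p - 1)}
    (h : i.1 + k.1 = n - 1) : s.z i + 2 * s.a k = q - i - 1 := by
  have hk := k.isLt
  have := s.hza ⟨p - 2 - k, by omega⟩
  have e1 : (⟨q + (p - 2 - k), by omega⟩ : Fin n) = i := Fin.ext (by simp only; omega)
  have e2 : (⟨p - 2 - (p - 2 - k), by omega⟩ : Fin (p - 1)) = k :=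
    Fin.ext (by simp only; omega)
  simp only at this
  rw [e1, e2] at this
  omega

theorem ext_of_z_eq (hq : 0 < q) {s t : RhoSol01 n p q hp hn} (h : s.z = t.z) : s = t := by
  have hb : s.b = t.b := funext fun k => by
    have := s.z_sub_two_mul_b (i := ⟨k, by omega⟩) rfl
    have := t.z_sub_two_mul_b (i := ⟨k, by omega⟩) rfl
    rw [h] at *
    omega
  have ha : s.a = t.a := funext fun k => by
    have hk : (n - 1 - k) + k.1 = n - 1 := by have := k.isLt; omega
    have := s.z_add_two_mul_a hq (i := ⟨n - 1 - k, by omega⟩) hk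
    have := t.z_add_two_mul_a hq (i := ⟨n - 1 - k, by omega⟩) hk
    rw [h] at *
    omega
  cases s; cases t; cases h; cases hb; cases ha; rfl

theorem isAdmissible (s : RhoSol01 n p q hp hn) (hq : 0 < q) : IsAdmissible q s.z := by
  intro i
  constructor
  · intro hi
    refine ⟨s.b ⟨i, hi⟩, s.b_nonneg _, ?_⟩
    have := s.z_sub_two_mul_b (i := i) (k := ⟨i, hi⟩) rfl
    omega
  · intro hi
    have := i.isLt
    refine ⟨s.a ⟨n - 1 - i, by omega⟩, s.a_nonneg _, ?_⟩
    have := s.z_add_two_mul_a hq (i := i) (k := ⟨n - 1 - i, by omega⟩) (by simp only; omega)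
    omega

theorem exists_z_eq (hq : 0 < q) {z : Fin n → ℤ} (hz : StrictAnti z)
    (habs : univ.image (fun i => |z i|) = Icc 1 (n : ℤ)) (hadm : IsAdmissible q z) :
    ∃ s : RhoSol01 n p q hp hn, s.z = z := by
  have hanti := hz.antitone_add_val
  refine ⟨{
    z := z
    b := fun k => (z ⟨k, by omega⟩ - (q - k)) / 2
    a := fun k => ((q : ℤ) - (n - 1 - k : ℕ) - 1 - z ⟨n - 1 - k, by omega⟩) / 2
    z_anti := hz
    z_abs := habs
    b_anti := fun k k' hk => by
      have := hanti (show (⟨k, by omega⟩ : Fin n) ≤ ⟨k', by omega⟩ from hk)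
      dsimp only at this ⊢
      omega
    a_anti := fun k k' hk => by
      have hk' : k.1 ≤ k'.1 := hk
      have := hanti (show (⟨n - 1 - k', by omega⟩ : Fin n) ≤ ⟨n - 1 - k, by omega⟩ from
        Fin.mk_le_mk.mpr (by omega))
      dsimp only at this ⊢
      omega
    b_nonneg := fun k => by
      obtain ⟨b, hb, hzb⟩ := (hadm ⟨k, by omega⟩).1 k.isLt
      dsimp only at hzb ⊢
      omega
    a_nonneg := fun k => by
      have := k.isLt
      obtain ⟨a, ha, hza⟩ := (hadm ⟨n - 1 - k, by omega⟩).2 (by dsimp only; omega)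
      dsimp only at hza ⊢
      omega
    hzb := fun k => by
      obtain ⟨b, hb, hzb⟩ := (hadm ⟨k, by omega⟩).1 k.isLt
      dsimp only at hzb ⊢
      omega
    hza := fun j => by
      have := j.isLt
      obtain ⟨a, ha, hza⟩ := (hadm ⟨q + j, by omega⟩).2 (by dsimp only; omega)
      have e : (⟨n - 1 - (p - 2 - j), by omega⟩ : Fin n) = ⟨q + j, by omega⟩ :=
        Fin.ext (by dsimp only; omega)
      dsimp only at hza ⊢
      rw [e]
      omega }, rfl⟩

end

variable {m p q : ℕ} {hp : 1 ≤ p} {hn : q - 1 + p = 2 * m + 1}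

theorem image_z_eq_signedSet (s : RhoSol01 (2 * m + 1) p q hp hn) (hq : 0 < q)
    (hqe : q % 2 = 0) :
    univ.image s.z = signedSet (2 * m + 1) (pairUnion (pairIndexSet m (univ.image s.z))) := by
  have hadm := s.isAdmissible hq
  have hcard := hadm.card_filter_pos s.z_anti (by omega)
  have hpar := hadm.posCountParity s.z_anti s.z_abs (by omega)
  set T := univ.image s.z
  have hT : IsSignedSet (2 * m + 1) T := isSignedSet_image s.z_abs
  refine hT.eq_signedSet_pairUnion (posCountParity_iff_hasPairedPositives.mp hpar)
    fun hmax => ?_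
  have htop := hpar (2 * m + 1) (by omega) le_rfl
  have hnone : #{y ∈ T | ((2 * m + 1 : ℕ) : ℤ) < y} = 0 := card_eq_zero.mpr <|
    filter_eq_empty_iff.mpr fun y hy => by have := (hT.abs_mem_Icc hy).2; grind
  have := card_filter_lt_add_posCount T (2 * m + 1)
  rw [if_pos (by exact_mod_cast hmax)] at htop
  omega

theorem card_pairIndexSet (s : RhoSol01 (2 * m + 1) p q hp hn) (hq : 0 < q) (hqe : q % 2 = 0) :
    #(pairIndexSet m (univ.image s.z)) = q / 2 := by
  have hcard := (s.isAdmissible hq).card_filter_pos s.z_anti (by omega)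
  rw [image_z_eq_signedSet s hq hqe, filter_pos_signedSet
    (fun y hy => pos_and_le_of_mem_pairUnion pairIndexSet_subset hy), card_pairUnion] at hcard
  omega

theorem exists_pairIndexSet_eq (hq : 0 < q) {S : Finset ℤ} (hS : S ⊆ Ico 0 (m : ℤ))
    (hSq : 2 * #S = q) :
    ∃ s : RhoSol01 (2 * m + 1) p q hp hn, pairIndexSet m (univ.image s.z) = S := by
  set T := signedSet (2 * m + 1) (pairUnion S)
  have hT : IsSignedSet (2 * m + 1) T := isSignedSet_signedSet
  obtain ⟨z, hz, himg⟩ := T.exists_strictAnti_image_eq hT.card_eq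
  have habs : univ.image (fun i => |z i|) = Icc 1 ((2 * m + 1 : ℕ) : ℤ) := by
    rw [← hT.2, ← himg, image_image]
    rfl
  have hadm : IsAdmissible q z := by
    refine isAdmissible_of_posCountParity hz habs ?_ ?_ <;> rw [himg]
    · rw [filter_pos_signedSet (fun y hy => pos_and_le_of_mem_pairUnion hS hy), card_pairUnion,
        hSq]
    · exact posCountParity_iff_hasPairedPositives.mpr hasPairedPositives_signedSet_pairUnion
  obtain ⟨s, rfl⟩ := exists_z_eq (hp := hp) (hn := hn) hq hz habs hadm
  exact ⟨s, by rw [himg, pairIndexSet_signedSet_pairUnion hS]⟩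

theorem card_eq_choose (hq : 0 < q) (hqe : q % 2 = 0) :
    Nat.card (RhoSol01 (2 * m + 1) p q hp hn) = m.choose (q / 2) := by
  let F := (Ico (0 : ℤ) m).powersetCard (q / 2)
  have hF : ∀ s : RhoSol01 (2 * m + 1) p q hp hn, pairIndexSet m (univ.image s.z) ∈ F :=
    fun s => mem_powersetCard.mpr ⟨pairIndexSet_subset, s.card_pairIndexSet hq hqe⟩
  have hbij : Function.Bijective fun s => (⟨_, hF s⟩ : F) := by
    constructor
    · intro s t hst
      refine ext_of_z_eq hq (s.z_anti.eq_of_image_eq t.z_anti ?_)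
      rw [image_z_eq_signedSet s hq hqe, image_z_eq_signedSet t hq hqe]
      exact congrArg _ (congrArg _ (Subtype.ext_iff.mp hst))
    · rintro ⟨S, hS⟩
      obtain ⟨hSsub, hScard⟩ := mem_powersetCard.mp hS
      obtain ⟨s, hs⟩ := exists_pairIndexSet_eq (hp := hp) (hn := hn) hq hSsub (by omega)
      exact ⟨s, Subtype.ext hs⟩
  rw [Nat.card_eq_of_bijective _ hbij, Nat.card_eq_fintype_card, Fintype.card_coe,
    card_powersetCard]
  simp

end RhoSol01

/-- Theorem on `X'(p,q;0,1)` with `p, q` even: the number of solutions equals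
`C(k−1, q/2) = C(k−1, (p−2)/2)` (here `n = 2k−1`, `p + q = 2k`, `p, q` even
positive). -/
theorem stmt15 (n k p q : ℕ) (hn : n = 2 * k - 1)
    (hppos : 0 < p) (hqpos : 0 < q) (hpq : p + q = 2 * k)
    (hqe : q % 2 = 0) :
    Nat.card (RhoSol01 n p q hppos (by omega)) = Nat.choose (k - 1) (q / 2) ∧
      Nat.choose (k - 1) (q / 2) = Nat.choose (k - 1) ((p - 2) / 2) := by
  obtain rfl : n = 2 * (k - 1) + 1 := by omega
  exact ⟨RhoSol01.card_eq_choose hqpos hqe, Nat.choose_symm_of_eq_add (by omega)⟩
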